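/- Symplectic quotient rule: let (X, ω) be a symplectic vector space and λ, μ, W subspaces with λ ⊆ W, μ = μ^ω (μ Lagrangian), and Index(λ,μ) + Index(λ^ω,μ) = 0 (both pairs being Fredholm). Then dim(W^ω ∩ μ) = dim X/(W+μ) < ∞ and W + μ = W^{ωω} + μ. -/
import Mathlib


universe u

/-- The annihilator `λ^ω = {y ∈ X : ω(x,y) = 0 for all x ∈ λ}` of a subspace of a
complex vector space with a sesquilinear form `ω` (linear in the first,
conjugate-linear in the second variable). -/
noncomputable def ann {X : Type*} [AddCommGroup X] [Module ℂ X]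
    (ω : X →ₗ[ℂ] X →ₗ⋆[ℂ] ℂ) (l : Submodule ℂ X) : Submodule ℂ X :=
  ⨅ x ∈ l, LinearMap.ker (ω x)

namespace SQR

open Module

section SDual

variable (Q : Type*) [AddCommGroup Q] [Module ℂ Q] [FiniteDimensional ℂ Q]

/-- Evaluation of semilinear functionals on a basis. -/
noncomputable def sEv : (Q →ₗ⋆[ℂ] ℂ) →ₗ[ℂ] (Fin (finrank ℂ Q) → ℂ) where
  toFun f := fun i => f (finBasis ℂ Q i)
  map_add' f g := by ext i; simp
  map_smul' c f := by ext i; simp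

lemma sEv_bijective : Function.Bijective (sEv Q) := by
  constructor
  · intro f g hfg
    apply Basis.ext (finBasis ℂ Q)
    intro i
    exact congrFun hfg i
  · intro v
    refine ⟨{ toFun := fun x => ∑ i, starRingEnd ℂ ((finBasis ℂ Q).repr x i) * v i,
              map_add' := ?_, map_smul' := ?_ }, ?_⟩
    · intro x y
      simp [add_mul, Finset.sum_add_distrib]
    · intro c x
      simp [Finset.mul_sum, mul_assoc]
    · ext i
      simp [sEv, Basis.repr_self, Finsupp.single_apply]

/-- The conjugate dual of a finite-dimensional complex space is linearly equivalent
to a product of copies of `ℂ`. -/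
noncomputable def sDualEquiv : (Q →ₗ⋆[ℂ] ℂ) ≃ₗ[ℂ] (Fin (finrank ℂ Q) → ℂ) :=
  LinearEquiv.ofBijective (sEv Q) (sEv_bijective Q)

instance : FiniteDimensional ℂ (Q →ₗ⋆[ℂ] ℂ) :=
  Module.Finite.of_surjective (sDualEquiv Q).symm.toLinearMap (sDualEquiv Q).symm.surjective

lemma finrank_sDual : finrank ℂ (Q →ₗ⋆[ℂ] ℂ) = finrank ℂ Q := by
  rw [(sDualEquiv Q).finrank_eq, finrank_fin_fun]

end SDual

variable {X : Type*} [AddCommGroup X] [Module ℂ X] (ω : X →ₗ[ℂ] X →ₗ⋆[ℂ] ℂ)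

lemma mem_ann {l : Submodule ℂ X} {y : X} : y ∈ ann ω l ↔ ∀ x ∈ l, ω x y = 0 := by
  simp [ann, Submodule.mem_iInf, LinearMap.mem_ker]

lemma ann_antitone {a b : Submodule ℂ X} (h : a ≤ b) : ann ω b ≤ ann ω a := by
  intro y hy
  rw [mem_ann] at hy ⊢
  exact fun x hx => hy x (h hx)

lemma le_ann_ann (hskew : ∀ x y, ω y x = - (starRingEnd ℂ) (ω x y)) (a : Submodule ℂ X) :
    a ≤ ann ω (ann ω a) := by
  intro x hx
  rw [mem_ann]
  intro y hy
  rw [mem_ann] at hy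
  rw [hskew]
  simp [hy x hx]

lemma ann_ann_ann (hskew : ∀ x y, ω y x = - (starRingEnd ℂ) (ω x y)) (a : Submodule ℂ X) :
    ann ω (ann ω (ann ω a)) = ann ω a :=
  le_antisymm (ann_antitone ω (le_ann_ann ω hskew a)) (le_ann_ann ω hskew (ann ω a))

/-- The pairing map `s → (X/p)^*` (conjugate dual), `y ↦ ω(y, ·)`. -/
noncomputable def Phi (p s : Submodule ℂ X) (h : ∀ y ∈ s, ∀ x ∈ p, ω y x = 0) :
    s →ₗ[ℂ] ((X ⧸ p) →ₗ⋆[ℂ] ℂ) where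
  toFun y := p.liftQ (ω (y : X)) (fun x hx => by simpa using h y y.2 x hx)
  map_add' y z := by
    refine LinearMap.ext fun q => ?_
    obtain ⟨x, rfl⟩ := Submodule.Quotient.mk_surjective p q
    simp
  map_smul' c y := by
    refine LinearMap.ext fun q => ?_
    obtain ⟨x, rfl⟩ := Submodule.Quotient.mk_surjective p q
    simp

@[simp] lemma Phi_apply (p s : Submodule ℂ X) (h) (y : s) (x : X) :
    Phi ω p s h y (Submodule.Quotient.mk x) = ω y x := rfl

lemma Phi_injective (hnd : ∀ x, (∀ y, ω x y = 0) → x = 0) (p s : Submodule ℂ X) (h) :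
    Function.Injective (Phi ω p s h) := by
  rw [injective_iff_map_eq_zero]
  intro y hy
  have : (y : X) = 0 := by
    apply hnd
    intro z
    have := congrArg (fun f => f (Submodule.Quotient.mk z)) hy
    simpa using this
  exact Subtype.ext this

lemma vanish (hskew : ∀ x y, ω y x = - (starRingEnd ℂ) (ω x y))
    {a m : Submodule ℂ X} (hm : m = ann ω m) :
    ∀ y ∈ ann ω a ⊓ m, ∀ x ∈ a ⊔ m, ω y x = 0 := by
  intro y hy x hx
  obtain ⟨hya, hym⟩ := hy
  obtain ⟨xa, hxa, xm, hxm, rfl⟩ := Submodule.mem_sup.mp hx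
  have h1 : ω xa y = 0 := (mem_ann ω).mp hya xa hxa
  have h2 : ω xm y = 0 := by
    rw [hm] at hym
    exact (mem_ann ω).mp hym xm hxm
  rw [map_add, hskew xa y, hskew xm y, h1, h2]
  simp

lemma quot_eq_of_le_of_finrank {A B : Submodule ℂ X} (hAB : A ≤ B)
    [FiniteDimensional ℂ (X ⧸ A)]
    (h : finrank ℂ (X ⧸ A) ≤ finrank ℂ (X ⧸ B)) : A = B := by
  set p := B.map A.mkQ with hp
  have e := Submodule.quotientQuotientEquivQuotient A B hAB
  have h1 : finrank ℂ ((X ⧸ A) ⧸ p) + finrank ℂ p = finrank ℂ (X ⧸ A) :=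
    Submodule.finrank_quotient_add_finrank p
  have h2 : finrank ℂ ((X ⧸ A) ⧸ p) = finrank ℂ (X ⧸ B) := e.finrank_eq
  have hpz : finrank ℂ p = 0 := by omega
  have hbot : p = ⊥ := by rwa [Submodule.finrank_eq_zero] at hpz
  refine le_antisymm hAB fun b hb => ?_
  have : A.mkQ b ∈ p := Submodule.mem_map_of_mem hb
  rw [hbot, Submodule.mem_bot] at this
  simpa [Submodule.Quotient.mk_eq_zero] using this

lemma general_step (hskew : ∀ x y, ω y x = - (starRingEnd ℂ) (ω x y))
    (hnd : ∀ x, (∀ y, ω x y = 0) → x = 0)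
    {l m W : Submodule ℂ X} (hlW : l ≤ W) (hm : m = ann ω m)
    [FiniteDimensional ℂ (X ⧸ (l ⊔ m))]
    (hsurj : Function.Surjective (Phi ω (l ⊔ m) (ann ω l ⊓ m) (vanish ω hskew hm))) :
    FiniteDimensional ℂ ↥(ann ω W ⊓ m) ∧ FiniteDimensional ℂ (X ⧸ (W ⊔ m)) ∧
      finrank ℂ ↥(ann ω W ⊓ m) = finrank ℂ (X ⧸ (W ⊔ m)) := by
  have hWm : l ⊔ m ≤ W ⊔ m := sup_le_sup_right hlW m
  set π : (X ⧸ (l ⊔ m)) →ₗ[ℂ] (X ⧸ (W ⊔ m)) :=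
    Submodule.mapQ (l ⊔ m) (W ⊔ m) LinearMap.id hWm with hπdef
  have hπmk : ∀ x : X, π (Submodule.Quotient.mk x) = Submodule.Quotient.mk x := by
    intro x; simp [hπdef, Submodule.mapQ_apply]
  have hπsurj : Function.Surjective π := by
    intro q
    obtain ⟨x, rfl⟩ := Submodule.Quotient.mk_surjective (W ⊔ m) q
    exact ⟨Submodule.Quotient.mk x, hπmk x⟩
  have hQW : FiniteDimensional ℂ (X ⧸ (W ⊔ m)) := Module.Finite.of_surjective π hπsurj
  have hfl : FiniteDimensional ℂ ↥(ann ω l ⊓ m) :=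
    FiniteDimensional.of_injective (Phi ω (l ⊔ m) (ann ω l ⊓ m) (vanish ω hskew hm))
      (Phi_injective ω hnd _ _ _)
  have hle : ann ω W ⊓ m ≤ ann ω l ⊓ m := inf_le_inf_right m (ann_antitone ω hlW)
  have hfW : FiniteDimensional ℂ ↥(ann ω W ⊓ m) :=
    Submodule.finiteDimensional_of_le hle
  refine ⟨hfW, hQW, ?_⟩
  have hWsurj : Function.Surjective (Phi ω (W ⊔ m) (ann ω W ⊓ m) (vanish ω hskew hm)) := by
    intro g
    obtain ⟨y, hy⟩ := hsurj (g.comp π)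
    have hyW : (y : X) ∈ ann ω W := by
      rw [mem_ann]
      intro x hx
      have h0 : ω (y : X) x = 0 := by
        have := congrArg (fun f => f (Submodule.Quotient.mk x)) hy
        simp only [Phi_apply, LinearMap.comp_apply, hπmk] at this
        rw [this]
        have : (Submodule.Quotient.mk x : X ⧸ (W ⊔ m)) = 0 :=
          (Submodule.Quotient.mk_eq_zero _).mpr (Submodule.mem_sup_left hx)
        rw [this, map_zero]
      rw [hskew, h0]
      simp
    refine ⟨⟨(y : X), hyW, y.2.2⟩, ?_⟩
    refine LinearMap.ext fun q => ?_
    obtain ⟨x, rfl⟩ := Submodule.Quotient.mk_surjective (W ⊔ m) q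
    have := congrArg (fun f => f (Submodule.Quotient.mk x)) hy
    simp only [Phi_apply, LinearMap.comp_apply, hπmk] at this
    simpa using this
  have e := LinearEquiv.ofBijective (Phi ω (W ⊔ m) (ann ω W ⊓ m) (vanish ω hskew hm))
    ⟨Phi_injective ω hnd _ _ _, hWsurj⟩
  rw [e.finrank_eq, finrank_sDual]

end SQR

/-- **Symplectic quotient rule.** If `λ ⊆ W`, `μ = μ^ω` is Lagrangian,
and `Index(λ,μ) + Index(λ^ω,μ) = 0` (both pairs Fredholm), then
`dim (W^ω ∩ μ) = dim X/(W+μ) < ∞` and `W + μ = W^{ωω} + μ`. -/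
theorem symplectic_quotient_rule {X : Type*} [AddCommGroup X] [Module ℂ X]
    (ω : X →ₗ[ℂ] X →ₗ⋆[ℂ] ℂ)
    (hskew : ∀ x y, ω y x = - (starRingEnd ℂ) (ω x y))
    (hnd : ∀ x, (∀ y, ω x y = 0) → x = 0)
    (l m W : Submodule ℂ X)
    (hlW : l ≤ W) (hm : m = ann ω m)
    [FiniteDimensional ℂ ↥(l ⊓ m)] [FiniteDimensional ℂ (X ⧸ (l ⊔ m))]
    [FiniteDimensional ℂ ↥(ann ω l ⊓ m)] [FiniteDimensional ℂ (X ⧸ (ann ω l ⊔ m))]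
    (hidx : (Module.finrank ℂ ↥(l ⊓ m) : ℤ) - Module.finrank ℂ (X ⧸ (l ⊔ m))
        + ((Module.finrank ℂ ↥(ann ω l ⊓ m) : ℤ)
            - Module.finrank ℂ (X ⧸ (ann ω l ⊔ m))) = 0) :
    FiniteDimensional ℂ ↥(ann ω W ⊓ m) ∧
    FiniteDimensional ℂ (X ⧸ (W ⊔ m)) ∧
    Module.finrank ℂ ↥(ann ω W ⊓ m) = Module.finrank ℂ (X ⧸ (W ⊔ m)) ∧
    W ⊔ m = ann ω (ann ω W) ⊔ m := by
  classical
  open Module SQR in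
  -- inequality 1 : dim (l^ω ⊓ m) ≤ dim X/(l ⊔ m)
  have i1 : finrank ℂ ↥(ann ω l ⊓ m) ≤ finrank ℂ (X ⧸ (l ⊔ m)) := by
    have := LinearMap.finrank_le_finrank_of_injective
      (Phi_injective ω hnd (l ⊔ m) (ann ω l ⊓ m) (vanish ω hskew hm))
    rwa [finrank_sDual] at this
  -- inequality 2 : dim (l^ωω ⊓ m) ≤ dim X/(l^ω ⊔ m)
  have hf2 : FiniteDimensional ℂ ↥(ann ω (ann ω l) ⊓ m) :=
    FiniteDimensional.of_injective
      (Phi ω (ann ω l ⊔ m) (ann ω (ann ω l) ⊓ m) (vanish ω hskew hm))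
      (Phi_injective ω hnd _ _ _)
  have i2 : finrank ℂ ↥(ann ω (ann ω l) ⊓ m) ≤ finrank ℂ (X ⧸ (ann ω l ⊔ m)) := by
    have := LinearMap.finrank_le_finrank_of_injective
      (Phi_injective ω hnd (ann ω l ⊔ m) (ann ω (ann ω l) ⊓ m) (vanish ω hskew hm))
    rwa [finrank_sDual] at this
  -- inequality 3 : dim (l ⊓ m) ≤ dim (l^ωω ⊓ m)
  have i3 : finrank ℂ ↥(l ⊓ m) ≤ finrank ℂ ↥(ann ω (ann ω l) ⊓ m) :=
    Submodule.finrank_mono (inf_le_inf_right m (le_ann_ann ω hskew l))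
  -- from the index hypothesis we get equality in inequality 1
  have e1 : finrank ℂ ↥(ann ω l ⊓ m) = finrank ℂ (X ⧸ (l ⊔ m)) := by omega
  -- hence Φ_l is surjective
  have hsurj : Function.Surjective (Phi ω (l ⊔ m) (ann ω l ⊓ m) (vanish ω hskew hm)) := by
    have hfr : finrank ℂ ↥(ann ω l ⊓ m) = finrank ℂ ((X ⧸ (l ⊔ m)) →ₗ⋆[ℂ] ℂ) := by
      rw [finrank_sDual]; exact e1
    exact (LinearMap.injective_iff_surjective_of_finrank_eq_finrank hfr).mp
      (Phi_injective ω hnd _ _ _)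
  obtain ⟨hA, hB, hC⟩ := general_step ω hskew hnd hlW hm hsurj
  refine ⟨hA, hB, hC, ?_⟩
  -- apply the general step to W^{ωω}
  have hlWW : l ≤ ann ω (ann ω W) := hlW.trans (le_ann_ann ω hskew W)
  obtain ⟨hA', hB', hC'⟩ := general_step ω hskew hnd hlWW hm hsurj
  rw [ann_ann_ann ω hskew W] at hC'
  exact quot_eq_of_le_of_finrank (sup_le_sup_right (le_ann_ann ω hskew W) m)
    (le_of_eq (hC.symm.trans hC'))
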